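/- Let S(w,t) = (1 − t/||w||)_+ w. For θ > 0, λ' > 0 and ς ∈ R^p with ||ς|| > γλ' where γ > 1 + 1/θ, the vector δ* = ς minimizes f(δ) = (θ/2)||ς − δ||² + p_γ(||δ||, λ') over R^p, where p_γ is the SCAD penalty. -/
import Mathlib

open MeasureTheory intervalIntegral

noncomputable def scadPenalty (γ lam t : ℝ) : ℝ :=
  lam * ∫ x in (0 : ℝ)..|t|, min 1 (max (γ - x / lam) 0 / (γ - 1))

lemma g_cont (γ lam : ℝ) :
    Continuous (fun x : ℝ => min 1 (max (γ - x / lam) 0 / (γ - 1))) :=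
  continuous_const.min
    (((continuous_const.sub (continuous_id.div_const lam)).max continuous_const).div_const _)

lemma g_nonneg {γ : ℝ} (hγ : 1 < γ) (lam x : ℝ) :
    0 ≤ min 1 (max (γ - x / lam) 0 / (γ - 1)) :=
  le_min zero_le_one (div_nonneg (le_max_right _ _) (by linarith))

lemma g_zero {γ lam x : ℝ} (hγ : 1 < γ) (hx : γ * lam ≤ x) (hlam : 0 < lam) :
    min 1 (max (γ - x / lam) 0 / (γ - 1)) = 0 := by
  have h1 : γ - x / lam ≤ 0 := by
    rw [sub_nonpos, le_div_iff₀ hlam]; linarith [hx]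
  rw [max_eq_right h1, zero_div, min_eq_right (by norm_num)]

lemma scad_sub {γ lam t s : ℝ} (ht : 0 ≤ t) (hts : t ≤ s) :
    scadPenalty γ lam s - scadPenalty γ lam t
      = lam * ∫ x in t..s, min 1 (max (γ - x / lam) 0 / (γ - 1)) := by
  unfold scadPenalty
  rw [abs_of_nonneg ht, abs_of_nonneg (ht.trans hts), ← mul_sub,
    integral_interval_sub_left ((g_cont γ lam).intervalIntegrable _ _)
      ((g_cont γ lam).intervalIntegrable _ _)]

/-- For `θ > 0`, `λ' > 0`, `γ > 1 + 1/θ` and `‖ς‖ > γλ'`, the vector `δ* = ς`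
minimizes `f(δ) = (θ/2)‖ς − δ‖² + p_γ(‖δ‖, λ')` over `ℝ^p`. -/
theorem identity_minimizes_scad_prox {p : ℕ} (θ lam' γ : ℝ)
    (hθ : 0 < θ) (hlam : 0 < lam') (hγ : 1 + 1 / θ < γ)
    (ς : EuclideanSpace ℝ (Fin p)) (hς : γ * lam' < ‖ς‖) :
    ∀ δ : EuclideanSpace ℝ (Fin p),
      θ / 2 * ‖ς - ς‖ ^ 2 + scadPenalty γ lam' ‖ς‖ ≤
        θ / 2 * ‖ς - δ‖ ^ 2 + scadPenalty γ lam' ‖δ‖ := by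
  intro δ
  have hγ1 : 1 < γ := by
    have : 0 < 1 / θ := by positivity
    linarith
  set t := ‖δ‖ with htdef
  set s := ‖ς‖ with hsdef
  set u := γ * lam' with hudef
  have ht0 : 0 ≤ t := norm_nonneg _
  have hs0 : 0 ≤ s := norm_nonneg _
  have hterm : 0 ≤ θ / 2 * ‖ς - δ‖ ^ 2 := by positivity
  simp only [sub_self, norm_zero, ne_eq, OfNat.ofNat_ne_zero, not_false_eq_true,
    zero_pow, mul_zero, zero_add]
  -- goal: scadPenalty γ lam' s ≤ θ / 2 * ‖ς - δ‖ ^ 2 + scadPenalty γ lam' t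
  rcases le_or_gt s t with hst | hts
  · -- monotonicity
    have h := scad_sub (γ := γ) (lam := lam') hs0 hst
    have hnn : 0 ≤ ∫ x in s..t, min 1 (max (γ - x / lam') 0 / (γ - 1)) :=
      intervalIntegral.integral_nonneg hst (fun x _ => g_nonneg hγ1 lam' x)
    nlinarith [mul_nonneg hlam.le hnn]
  · have h := scad_sub (γ := γ) (lam := lam') ht0 hts.le
    rcases le_or_gt u t with hut | htu
    · -- integrand vanishes on [t,s]
      have hz : ∫ x in t..s, min 1 (max (γ - x / lam') 0 / (γ - 1)) = 0 := by
        rw [intervalIntegral.integral_congr (g := fun _ => (0:ℝ))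
          (fun x hx => by
            rw [Set.uIcc_of_le hts.le] at hx
            exact g_zero hγ1 (hut.trans hx.1) hlam)]
        simp
      rw [hz, mul_zero] at h
      linarith
    · -- split at u
      have hus : u ≤ s := hς.le
      have hsplit : (∫ x in t..u, min 1 (max (γ - x / lam') 0 / (γ - 1)))
            + ∫ x in u..s, min 1 (max (γ - x / lam') 0 / (γ - 1))
          = ∫ x in t..s, min 1 (max (γ - x / lam') 0 / (γ - 1)) :=
        intervalIntegral.integral_add_adjacent_intervals
          ((g_cont γ lam').intervalIntegrable _ _) ((g_cont γ lam').intervalIntegrable _ _)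
      have hz2 : ∫ x in u..s, min 1 (max (γ - x / lam') 0 / (γ - 1)) = 0 := by
        rw [intervalIntegral.integral_congr (g := fun _ => (0:ℝ))
          (fun x hx => by
            rw [Set.uIcc_of_le hus] at hx
            exact g_zero hγ1 hx.1 hlam)]
        simp
      have hmono : (∫ x in t..u, min 1 (max (γ - x / lam') 0 / (γ - 1)))
          ≤ ∫ x in t..u, (γ - x / lam') / (γ - 1) := by
        apply intervalIntegral.integral_mono_on htu.le
          ((g_cont γ lam').intervalIntegrable _ _)
          (((continuous_const.sub (continuous_id.div_const lam')).div_const _).intervalIntegrable _ _)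
        intro x hx
        have hxu : x ≤ u := hx.2
        have hmax : max (γ - x / lam') 0 = γ - x / lam' := by
          apply max_eq_left
          rw [sub_nonneg, div_le_iff₀ hlam]; linarith [hxu]
        calc min 1 (max (γ - x / lam') 0 / (γ - 1)) ≤ max (γ - x / lam') 0 / (γ - 1) :=
              min_le_right _ _
          _ = (γ - x / lam') / (γ - 1) := by rw [hmax]
      have hcomp : ∫ x in t..u, (γ - x / lam') / (γ - 1)
          = ((u - t) * γ - (u^2/2 - t^2/2) / lam') / (γ - 1) := by
        rw [intervalIntegral.integral_div]
        congr 1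
        rw [intervalIntegral.integral_sub (intervalIntegrable_const)
          ((intervalIntegral.intervalIntegrable_id).div_const _)]
        simp [intervalIntegral.integral_div, integral_id, mul_comm]
        ring
      -- combine
      have key : scadPenalty γ lam' s - scadPenalty γ lam' t
          ≤ lam' * (((u - t) * γ - (u^2/2 - t^2/2) / lam') / (γ - 1)) := by
        rw [h, ← hsplit, hz2, add_zero]
        exact mul_le_mul_of_nonneg_left (hmono.trans_eq hcomp) hlam.le
      have hval : lam' * (((u - t) * γ - (u^2/2 - t^2/2) / lam') / (γ - 1))
          = (u - t)^2 / (2 * (γ - 1)) := by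
        have hl0 : lam' ≠ 0 := hlam.ne'
        have hg0 : γ - 1 ≠ 0 := by linarith
        field_simp
        ring
      rw [hval] at key
      -- (u-t)^2/(2(γ-1)) ≤ θ/2 (s-t)^2 ≤ θ/2 ‖ς-δ‖^2
      have hnorm : s - t ≤ ‖ς - δ‖ := norm_sub_norm_le _ _
      have h2 : (u - t)^2 / (2 * (γ - 1)) ≤ θ / 2 * (s - t)^2 := by
        rw [div_le_iff₀ (by linarith : (0:ℝ) < 2 * (γ - 1))]
        have h3 : (u - t)^2 ≤ (s - t)^2 := by nlinarith [hus, htu.le]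
        have h4 : 1 < (γ - 1) * θ := (div_lt_iff₀ hθ).mp (by linarith : 1 / θ < γ - 1)
        nlinarith [sq_nonneg (s - t)]
      have h5 : θ / 2 * (s - t)^2 ≤ θ / 2 * ‖ς - δ‖^2 := by
        have hst0 : 0 ≤ s - t := by linarith [htu.le, hus]
        exact mul_le_mul_of_nonneg_left (pow_le_pow_left₀ hst0 hnorm 2) (by positivity)
      linarith
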